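/- arXiv:2203.08006 — 6 statements merged into one kernel-verified Lean document; each statement's English description precedes it below -/
import Mathlib

section
/- Let f be a decreasing integrable function on an interval C = [a,b], let C' and C'' denote the left and right halves of C, let p(C) = ∫_C f, and let f(C) = p(C)/(b-a) be the average of f on C. Then p(C') - p(C'') ≤ ∫_C |f - f(C)|. -/
open MeasureTheory

theorem stmt0 (f : ℝ → ℝ) (a b : ℝ) (hab : a < b)
    (hmono : AntitoneOn f (Set.Icc a b))
    (hint : IntegrableOn f (Set.Icc a b)) :
    (∫ x in a..(a+b)/2, f x) - (∫ x in ((a+b)/2)..b, f x) ≤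
      ∫ x in a..b, |f x - (∫ t in a..b, f t) / (b - a)| := by
  set m : ℝ := (a+b)/2 with hm
  set c : ℝ := (∫ t in a..b, f t) / (b - a) with hc
  have ham : a ≤ m := by simp only [hm]; linarith
  have hmb : m ≤ b := by simp only [hm]; linarith
  have h1 : IntervalIntegrable f volume a m := by
    rw [intervalIntegrable_iff_integrableOn_Icc_of_le ham]
    exact hint.mono_set (Set.Icc_subset_Icc le_rfl hmb)
  have h2 : IntervalIntegrable f volume m b := by
    rw [intervalIntegrable_iff_integrableOn_Icc_of_le hmb]
    exact hint.mono_set (Set.Icc_subset_Icc ham le_rfl)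
  have hc1 : IntervalIntegrable (fun x => f x - c) volume a m := h1.sub intervalIntegrable_const
  have hc2 : IntervalIntegrable (fun x => f x - c) volume m b := h2.sub intervalIntegrable_const
  have key : (∫ x in a..m, f x) - (∫ x in m..b, f x)
      = (∫ x in a..m, f x - c) - (∫ x in m..b, f x - c) := by
    rw [intervalIntegral.integral_sub h1 intervalIntegrable_const,
        intervalIntegral.integral_sub h2 intervalIntegrable_const,
        intervalIntegral.integral_const, intervalIntegral.integral_const]
    have : (m - a) = (b - m) := by simp only [hm]; ring
    rw [this]; ring
  rw [key]
  have e1 : (∫ x in a..m, f x - c) ≤ ∫ x in a..m, |f x - c| := by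
    calc (∫ x in a..m, f x - c) ≤ |∫ x in a..m, f x - c| := le_abs_self _
    _ ≤ ∫ x in a..m, |f x - c| := intervalIntegral.abs_integral_le_integral_abs ham
  have e2 : -(∫ x in m..b, f x - c) ≤ ∫ x in m..b, |f x - c| := by
    calc -(∫ x in m..b, f x - c) ≤ |∫ x in m..b, f x - c| := neg_le_abs _
    _ ≤ ∫ x in m..b, |f x - c| := intervalIntegral.abs_integral_le_integral_abs hmb
  have hsum : (∫ x in a..m, |f x - c|) + (∫ x in m..b, |f x - c|)
      = ∫ x in a..b, |f x - c| :=
    intervalIntegral.integral_add_adjacent_intervals hc1.abs hc2.abs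
  linarith
end

section
/- Let f be a decreasing integrable function on an interval C = [a,b], let C' and C'' denote the left and right halves of C, p(C) = ∫_C f, and f(C) the average of f on C. Then ∫_C |f - f(C)| ≤ 2(p(C') - p(C'')). -/
open MeasureTheory

theorem stmt1 (f : ℝ → ℝ) (a b : ℝ) (hab : a < b)
    (hmono : AntitoneOn f (Set.Icc a b))
    (hint : IntegrableOn f (Set.Icc a b)) :
    (∫ x in a..b, |f x - (∫ t in a..b, f t) / (b - a)|) ≤
      2 * ((∫ x in a..(a+b)/2, f x) - (∫ x in ((a+b)/2)..b, f x)) := by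
  set m := (a+b)/2 with hm
  set μ := (∫ t in a..b, f t) / (b - a) with hμ
  set K := f m with hK
  clear_value m μ K
  have ham : a ≤ m := by rw [hm]; linarith
  have hmb : m ≤ b := by rw [hm]; linarith
  have hmm : m - a = b - m := by rw [hm]; ring
  have hmem : m ∈ Set.Icc a b := ⟨ham, hmb⟩
  have hint' : IntervalIntegrable f volume a b := by
    apply IntegrableOn.intervalIntegrable
    rwa [Set.uIcc_of_le hab.le]
  have hsub1 : Set.uIcc a m ⊆ Set.uIcc a b := by
    rw [Set.uIcc_of_le ham, Set.uIcc_of_le hab.le]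
    exact Set.Icc_subset_Icc le_rfl hmb
  have hsub2 : Set.uIcc m b ⊆ Set.uIcc a b := by
    rw [Set.uIcc_of_le hmb, Set.uIcc_of_le hab.le]
    exact Set.Icc_subset_Icc ham le_rfl
  have hint1 : IntervalIntegrable f volume a m := hint'.mono_set hsub1
  have hint2 : IntervalIntegrable f volume m b := hint'.mono_set hsub2
  -- left half
  have h4 : (∫ x in a..m, |f x - K|) = (∫ x in a..m, f x) - (m - a) * K := by
    have hcong : Set.EqOn (fun x => |f x - K|) (fun x => f x - K) (Set.uIcc a m) := by
      intro x hx
      rw [Set.uIcc_of_le ham] at hx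
      have hfx : K ≤ f x := by
        rw [hK]; exact hmono ⟨hx.1, hx.2.trans hmb⟩ hmem hx.2
      exact abs_of_nonneg (sub_nonneg.mpr hfx)
    rw [intervalIntegral.integral_congr hcong,
      intervalIntegral.integral_sub hint1 intervalIntegrable_const,
      intervalIntegral.integral_const, smul_eq_mul]
  -- right half
  have h5 : (∫ x in m..b, |f x - K|) = (b - m) * K - (∫ x in m..b, f x) := by
    have hcong : Set.EqOn (fun x => |f x - K|) (fun x => K - f x) (Set.uIcc m b) := by
      intro x hx
      rw [Set.uIcc_of_le hmb] at hx
      have hfx : f x ≤ K := by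
        rw [hK]; exact hmono hmem ⟨ham.trans hx.1, hx.2⟩ hx.1
      show |f x - K| = K - f x
      rw [abs_of_nonpos (sub_nonpos.mpr hfx)]; ring
    rw [intervalIntegral.integral_congr hcong,
      intervalIntegral.integral_sub intervalIntegrable_const hint2,
      intervalIntegral.integral_const, smul_eq_mul]
  have habs : IntervalIntegrable (fun x => |f x - K|) volume a b :=
    (hint'.sub intervalIntegrable_const).abs
  have hsplit : (∫ x in a..b, |f x - K|)
      = (∫ x in a..m, f x) - (∫ x in m..b, f x) := by
    rw [← intervalIntegral.integral_add_adjacent_intervals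
      (habs.mono_set hsub1) (habs.mono_set hsub2), h4, h5, hmm]
    ring
  -- the constant error term
  have h7 : |K - μ| * (b - a) ≤ (∫ x in a..b, |f x - K|) := by
    have hba : (0:ℝ) < b - a := by linarith
    have hμint : μ * (b - a) = ∫ t in a..b, f t := by
      rw [hμ]; field_simp
    have hval : (∫ x in a..b, (K - f x)) = (K - μ) * (b - a) := by
      rw [intervalIntegral.integral_sub intervalIntegrable_const hint',
        intervalIntegral.integral_const, smul_eq_mul, ← hμint]
      ring
    have h71 : |K - μ| * (b - a) = |∫ x in a..b, (K - f x)| := by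
      rw [hval, abs_mul, abs_of_pos hba]
    rw [h71]
    calc |∫ x in a..b, (K - f x)| ≤ ∫ x in a..b, |K - f x| :=
          intervalIntegral.abs_integral_le_integral_abs hab.le
      _ = ∫ x in a..b, |f x - K| := by simp_rw [abs_sub_comm]
  -- pointwise triangle inequality
  have h1 : (∫ x in a..b, |f x - μ|) ≤ ∫ x in a..b, (|f x - K| + |K - μ|) := by
    apply intervalIntegral.integral_mono_on hab.le
      ((hint'.sub intervalIntegrable_const).abs)
      (habs.add intervalIntegrable_const)
    intro x _
    exact abs_sub_le _ K _
  have h2 : (∫ x in a..b, (|f x - K| + |K - μ|))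
      = (∫ x in a..b, |f x - K|) + |K - μ| * (b - a) := by
    rw [intervalIntegral.integral_add habs intervalIntegrable_const,
      intervalIntegral.integral_const, smul_eq_mul]
    ring
  have h3 : (∫ x in a..b, |f x - μ|)
      ≤ (∫ x in a..b, |f x - K|) + |K - μ| * (b - a) := h2 ▸ h1
  linarith [hsplit ▸ h7, hsplit ▸ h3]
end

section
/- Let q_0, q_1, ..., q_k be nonnegative reals, γ > 0, n ≥ 1, and set P_i = Σ_{j=0}^i q_j. Suppose P_0 ≥ γ²/n and P_{i+1} ≥ P_i + γ√(P_i/n) for all 0 ≤ i < k. Then q_i ≥ (γ²/(4n))·(i+1) for all 0 ≤ i ≤ k, and consequently P_k ≥ γ²k²/(8n). -/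
lemma aux_gauss (m : ℕ) : ∑ j ∈ Finset.range m, ((j : ℝ) + 1) = m * (m + 1) / 2 := by
  induction m with
  | zero => simp
  | succ m ih => rw [Finset.sum_range_succ, ih]; push_cast; ring

theorem stmt6 (q : ℕ → ℝ) (γ : ℝ) (n k : ℕ)
    (hγ : 0 < γ) (hn : 1 ≤ n) (hq : ∀ i, 0 ≤ q i)
    (P : ℕ → ℝ) (hP : ∀ i, P i = ∑ j ∈ Finset.range (i+1), q j)
    (h0 : γ^2 / n ≤ P 0)
    (hrec : ∀ i < k, P i + γ * Real.sqrt (P i / n) ≤ P (i+1)) :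
    (∀ i ≤ k, γ^2 / (4*n) * (i+1) ≤ q i) ∧ γ^2 * k^2 / (8*n) ≤ P k := by
  have hn' : (1:ℝ) ≤ n := by exact_mod_cast hn
  have hnpos : (0:ℝ) < n := lt_of_lt_of_le one_pos hn'
  set c : ℝ := γ^2 / (4*n) with hc
  have hcpos : 0 < c := by positivity
  -- main claim, strengthened
  have main : ∀ i, i ≤ k → ∀ j ≤ i, c * (j+1) ≤ q j := by
    intro i
    induction i with
    | zero =>
      intro _ j hj
      interval_cases j
      have hP0 : P 0 = q 0 := by rw [hP 0]; simp
      have : γ^2 / n ≤ q 0 := hP0 ▸ h0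
      have h4 : γ^2/(4*(n:ℝ)) ≤ γ^2/n :=
        div_le_div_of_nonneg_left (sq_nonneg γ) hnpos (by linarith)
      rw [hc]; push_cast; linarith
    | succ i ih =>
      intro hik j hj
      rcases Nat.lt_succ_iff_lt_or_eq.mp (Nat.lt_succ_of_le hj) with h | h
      · exact ih (le_trans (Nat.le_succ i) hik) j (Nat.lt_succ_iff.mp h)
      · subst h
        -- bound on P i
        have hsum : c * (i+1) * (i+2) / 2 ≤ P i := by
          rw [hP i]
          calc c * (i+1) * (i+2) / 2
              = ∑ j ∈ Finset.range (i+1), c * ((j:ℝ)+1) := by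
                rw [← Finset.mul_sum, aux_gauss (i+1)]; push_cast; ring
            _ ≤ ∑ j ∈ Finset.range (i+1), q j :=
                Finset.sum_le_sum (fun j hjm => ih (le_trans (Nat.le_succ i) hik) j
                  (Nat.lt_succ_iff.mp (Finset.mem_range.mp hjm)))
        have hPi_nonneg : 0 ≤ P i := le_trans (by positivity) hsum
        -- q (i+1) = P (i+1) - P i
        have hqdiff : P (i+1) = P i + q (i+1) := by
          rw [hP (i+1), hP i, Finset.sum_range_succ]
        have hrec' := hrec i (Nat.lt_of_succ_le hik)
        have hq1 : γ * Real.sqrt (P i / n) ≤ q (i+1) := by linarith [hqdiff ▸ hrec']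
        -- lower bound the sqrt
        have hge : c * ((i:ℝ)+2) / γ ≤ Real.sqrt (P i / n) := by
          rw [show c * ((i:ℝ)+2) / γ = Real.sqrt ((c * ((i:ℝ)+2) / γ)^2) from
            (Real.sqrt_sq (by positivity)).symm]
          apply Real.sqrt_le_sqrt
          rw [le_div_iff₀ hnpos]
          have key : (c * ((i:ℝ)+2) / γ)^2 * n ≤ c * (i+1) * (i+2) / 2 := by
            have hi : (0:ℝ) ≤ (i:ℝ) := Nat.cast_nonneg i
            have hLHS : (c * ((i:ℝ)+2) / γ)^2 * n = c * ((i:ℝ)+2)^2 / 4 := by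
              rw [hc]; field_simp
            rw [hLHS]
            nlinarith [mul_nonneg (mul_nonneg hcpos.le (by linarith : (0:ℝ) ≤ (i:ℝ)+2)) hi]
          exact le_trans key hsum
        have : c * ((i:ℝ)+2) ≤ γ * Real.sqrt (P i / n) := by
          have := mul_le_mul_of_nonneg_left hge (le_of_lt hγ)
          calc c * ((i:ℝ)+2) = γ * (c * ((i:ℝ)+2) / γ) := by field_simp
            _ ≤ γ * Real.sqrt (P i / n) := this
        push_cast
        linarith
  constructor
  · intro i hi
    exact main i hi i le_rfl
  · have hsum : c * (k+1) * (k+2) / 2 ≤ P k := by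
      rw [hP k]
      calc c * (k+1) * (k+2) / 2
          = ∑ j ∈ Finset.range (k+1), c * ((j:ℝ)+1) := by
            rw [← Finset.mul_sum, aux_gauss (k+1)]; push_cast; ring
        _ ≤ ∑ j ∈ Finset.range (k+1), q j :=
            Finset.sum_le_sum (fun j hjm => main k le_rfl j
              (Nat.lt_succ_iff.mp (Finset.mem_range.mp hjm)))
    have hk : (0:ℝ) ≤ (k:ℝ) := Nat.cast_nonneg k
    have hexp : c * ((k:ℝ)+1) * ((k:ℝ)+2) / 2 = γ^2 * (((k:ℝ)+1)*((k:ℝ)+2)) / (8*n) := by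
      rw [hc]; field_simp; ring
    rw [hexp] at hsum
    have h2 : γ^2 * (k:ℝ)^2 / (8*n) ≤ γ^2 * (((k:ℝ)+1)*((k:ℝ)+2)) / (8*n) := by
      gcongr
      nlinarith
    linarith
end

section
/- Let f be a decreasing density on [0,1] bounded by B, γ > 0, n ≥ 1. Call a level-ℓ dyadic interval C unbalanced if p(C') - p(C'') > γ√(p(C)/n), where C', C'' are its halves and p(S) = ∫_S f. Then the number of unbalanced intervals at level ℓ is at most (2√2/γ)·√(Bn)/2^{ℓ/2}. -/
open MeasureTheory

lemma aux_ii (f : ℝ → ℝ) (hint : IntegrableOn f (Set.Icc 0 1))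
    {c d : ℝ} (hc : c ∈ Set.Icc (0:ℝ) 1) (hd : d ∈ Set.Icc (0:ℝ) 1) :
    IntervalIntegrable f volume c d :=
  (hint.mono_set (Set.uIcc_subset_Icc hc hd)).intervalIntegrable

lemma aux_shift (f : ℝ → ℝ) (hmono : AntitoneOn f (Set.Icc 0 1))
    (hint : IntegrableOn f (Set.Icc 0 1))
    {a b h : ℝ} (ha : 0 ≤ a) (hab : a ≤ b) (hh : 0 ≤ h) (hb1 : b + h ≤ 1) :
    ∫ x in b..(b+h), f x ≤ ∫ x in a..(a+h), f x := by
  have key : ∫ x in b..(b+h), f x = ∫ x in a..(a+h), f (x + (b-a)) := by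
    rw [intervalIntegral.integral_comp_add_right]
    congr 1 <;> ring
  rw [key]
  apply intervalIntegral.integral_mono_on (by linarith)
  · have := (aux_ii f hint (c := b) (d := b + h) ⟨by linarith, by linarith⟩
      ⟨by linarith, hb1⟩).comp_add_right (b - a)
    have e1 : b - (b - a) = a := by ring
    have e2 : b + h - (b - a) = a + h := by ring
    rwa [e1, e2] at this
  · exact aux_ii f hint ⟨ha, by linarith⟩ ⟨by linarith, by linarith⟩
  · intro x hx
    apply hmono ⟨by linarith [hx.1], by linarith [hx.2]⟩
      ⟨by linarith [hx.1], by linarith [hx.2]⟩ (by linarith)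

lemma aux_comb (γ : ℝ) (n : ℕ) (hγ : 0 < γ) (hn : 1 ≤ n) (q : ℕ → ℝ) (S : Set ℕ)
    (hfin : S.Finite)
    (hbase : ∀ j ∈ S, γ^2/n < q j)
    (hchain : ∀ i ∈ S, ∀ j ∈ S, i < j → q j + γ * Real.sqrt (q j / n) ≤ q i)
    (hqnn : ∀ j ∈ S, 0 ≤ q j) :
    ∀ k : ℕ, k < hfin.toFinset.card →
      ∃ j ∈ S, γ^2/(8*(n:ℝ)) * ((k:ℝ)+2)^2 ≤ q j := by
  have hnr : (0:ℝ) < n := by exact_mod_cast hn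
  have hs2 : Real.sqrt 2 ^ 2 = 2 := Real.sq_sqrt (by norm_num)
  have hs2u : Real.sqrt 2 ≤ 1.5 := by nlinarith [hs2, Real.sqrt_nonneg 2]
  have hs2pos : 0 < Real.sqrt 2 := Real.sqrt_pos.mpr (by norm_num)
  set M := hfin.toFinset.card with hM
  let e := hfin.toFinset.orderIsoOfFin rfl
  have hmem : ∀ k : Fin M, ((e k : ℕ)) ∈ S := fun k => hfin.mem_toFinset.mp (e k).2
  have main : ∀ k : ℕ, ∀ hk : k < M,
      γ^2/(8*(n:ℝ)) * ((k:ℝ)+2)^2 ≤ q ((e (Fin.rev ⟨k, hk⟩)) : ℕ) := by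
    intro k
    induction k with
    | zero =>
      intro hk
      have hl := hbase _ (hmem (Fin.rev ⟨0, hk⟩))
      have e8 : γ^2/(8*(n:ℝ))*(((0:ℕ):ℝ)+2)^2 = (γ^2/(n:ℝ))/2 := by
        push_cast; field_simp; ring
      rw [e8]
      have : 0 ≤ γ^2/(n:ℝ) := by positivity
      linarith
    | succ k ih =>
      intro hk
      have hk' : k < M := Nat.lt_of_succ_lt hk
      have IH := ih hk'
      have hlt : ((e (Fin.rev ⟨k+1, hk⟩)) : ℕ) < ((e (Fin.rev ⟨k, hk'⟩)) : ℕ) := by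
        have h1 : Fin.rev ⟨k+1, hk⟩ < Fin.rev ⟨k, hk'⟩ :=
          Fin.rev_lt_rev.mpr (Fin.mk_lt_mk.mpr (Nat.lt_succ_self k))
        exact Subtype.coe_lt_coe.mpr (e.strictMono h1)
      have hS0 := hmem (Fin.rev ⟨k, hk'⟩)
      have hS1 := hmem (Fin.rev ⟨k+1, hk⟩)
      set j1 : ℕ := ((e (Fin.rev ⟨k+1, hk⟩)) : ℕ)
      set j0 : ℕ := ((e (Fin.rev ⟨k, hk'⟩)) : ℕ)
      clear_value j0 j1
      have hch := hchain j1 hS1 j0 hS0 hlt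
      have hq0nn := hqnn j0 hS0
      -- monotone step
      have hmon : γ^2/(8*(n:ℝ)) * ((k:ℝ)+2)^2
            + γ * Real.sqrt ((γ^2/(8*(n:ℝ)) * ((k:ℝ)+2)^2) / n)
          ≤ q j0 + γ * Real.sqrt (q j0 / n) := by
        have hsle : Real.sqrt ((γ^2/(8*(n:ℝ)) * ((k:ℝ)+2)^2) / n)
            ≤ Real.sqrt (q j0 / n) := by
          apply Real.sqrt_le_sqrt; gcongr
        have := mul_le_mul_of_nonneg_left hsle hγ.le
        linarith
      -- compute the sqrt
      have hden : (2*Real.sqrt 2*(n:ℝ))^2 = 8*(n:ℝ)^2 := by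
        rw [mul_pow, mul_pow, hs2]; ring
      have hyv : (γ^2/(8*(n:ℝ)) * ((k:ℝ)+2)^2) / n
          = (γ*((k:ℝ)+2)/(2*Real.sqrt 2*(n:ℝ)))^2 := by
        rw [div_pow, hden, mul_pow]
        field_simp
      have hsqrt : Real.sqrt ((γ^2/(8*(n:ℝ)) * ((k:ℝ)+2)^2) / n)
          = γ*((k:ℝ)+2)/(2*Real.sqrt 2*(n:ℝ)) := by
        rw [hyv, Real.sqrt_sq (by positivity)]
      -- numeric step
      have hnum : 2*Real.sqrt 2*(2*(k:ℝ)+5) ≤ 8*((k:ℝ)+2) := by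
        nlinarith [hs2u, (Nat.cast_nonneg k : (0:ℝ) ≤ (k:ℝ))]
      have hdiv : γ^2*(2*(k:ℝ)+5)/(8*(n:ℝ)) ≤ γ^2*((k:ℝ)+2)/(2*Real.sqrt 2*(n:ℝ)) := by
        rw [div_le_div_iff₀ (by positivity) (by positivity)]
        nlinarith [mul_le_mul_of_nonneg_left hnum (mul_nonneg (sq_nonneg γ) hnr.le)]
      have hid : γ^2/(8*(n:ℝ))*((k:ℝ)+3)^2
          = γ^2/(8*(n:ℝ))*((k:ℝ)+2)^2 + γ^2*(2*(k:ℝ)+5)/(8*(n:ℝ)) := by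
        field_simp; ring
      have hmulid : γ * (γ*((k:ℝ)+2)/(2*Real.sqrt 2*(n:ℝ)))
          = γ^2*((k:ℝ)+2)/(2*Real.sqrt 2*(n:ℝ)) := by ring
      have hcast2 : (((k+1:ℕ)):ℝ) + 2 = (k:ℝ)+3 := by push_cast; ring
      rw [hcast2, hid]
      rw [hsqrt, hmulid] at hmon
      linarith
  intro k hk
  exact ⟨_, hmem (Fin.rev ⟨k, hk⟩), main k hk⟩


set_option maxHeartbeats 1000000 in
theorem stmt7 (f : ℝ → ℝ) (B γ : ℝ) (n ℓ : ℕ)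
    (hB : 0 < B) (hγ : 0 < γ) (hn : 1 ≤ n)
    (hmono : AntitoneOn f (Set.Icc 0 1))
    (hnonneg : ∀ x ∈ Set.Icc (0:ℝ) 1, 0 ≤ f x)
    (hbound : ∀ x ∈ Set.Icc (0:ℝ) 1, f x ≤ B)
    (hint : IntegrableOn f (Set.Icc 0 1))
    (hdens : ∫ x in (0:ℝ)..1, f x = 1) :
    ({i : ℕ | i < 2^ℓ ∧
        γ * Real.sqrt ((∫ x in ((i:ℝ)/2^ℓ)..(((i:ℝ)+1)/2^ℓ), f x) / n) <
          (∫ x in ((i:ℝ)/2^ℓ)..((2*(i:ℝ)+1)/2^(ℓ+1)), f x) -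
            ∫ x in ((2*(i:ℝ)+1)/2^(ℓ+1))..(((i:ℝ)+1)/2^ℓ), f x}.ncard : ℝ)
      ≤ (2 * Real.sqrt 2 / γ) * Real.sqrt (B * n) / (2:ℝ)^((ℓ:ℝ)/2) := by
  have h2l : (0:ℝ) < 2^ℓ := by positivity
  have h2l1 : (0:ℝ) < 2^(ℓ+1) := by positivity
  set q : ℕ → ℝ := fun i => ∫ x in ((i:ℝ)/2^ℓ)..(((i:ℝ)+1)/2^ℓ), f x with hq
  set p1 : ℕ → ℝ := fun i => ∫ x in ((i:ℝ)/2^ℓ)..((2*(i:ℝ)+1)/2^(ℓ+1)), f x with hp1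
  set p2 : ℕ → ℝ := fun i => ∫ x in ((2*(i:ℝ)+1)/2^(ℓ+1))..(((i:ℝ)+1)/2^ℓ), f x with hp2
  -- arithmetic facts about endpoints
  have hM : ∀ j : ℕ, (2*(j:ℝ)+1)/2^(ℓ+1) = (j:ℝ)/2^ℓ + 1/2^(ℓ+1) := by
    intro j; rw [pow_succ]; field_simp
  have hE : ∀ j : ℕ, ((j:ℝ)+1)/2^ℓ = ((j:ℝ)/2^ℓ + 1/2^(ℓ+1)) + 1/2^(ℓ+1) := by
    intro j; rw [pow_succ]; field_simp; ring
  have hA0 : ∀ j : ℕ, 0 ≤ (j:ℝ)/2^ℓ := fun j => by positivity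
  have hB1 : ∀ j : ℕ, j < 2^ℓ → ((j:ℝ)+1)/2^ℓ ≤ 1 := by
    intro j hj
    rw [div_le_one h2l]
    have : (j:ℝ) + 1 ≤ ((2^ℓ : ℕ) : ℝ) := by exact_mod_cast hj
    simpa using this
  -- split q into halves
  have hh : (0:ℝ) < 1/2^(ℓ+1) := by positivity
  have memA : ∀ j : ℕ, j < 2^ℓ → (j:ℝ)/2^ℓ ∈ Set.Icc (0:ℝ) 1 := by
    intro j hj; exact ⟨hA0 j, by linarith [hE j, hB1 j hj]⟩
  have memM : ∀ j : ℕ, j < 2^ℓ → (2*(j:ℝ)+1)/2^(ℓ+1) ∈ Set.Icc (0:ℝ) 1 := by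
    intro j hj
    constructor
    · rw [hM j]; positivity
    · linarith [hM j, hE j, hB1 j hj, hA0 j]
  have memE : ∀ j : ℕ, j < 2^ℓ → ((j:ℝ)+1)/2^ℓ ∈ Set.Icc (0:ℝ) 1 := by
    intro j hj; exact ⟨by positivity, hB1 j hj⟩
  have hsplit : ∀ j : ℕ, j < 2^ℓ → q j = p1 j + p2 j := by
    intro j hj
    exact (intervalIntegral.integral_add_adjacent_intervals
      (aux_ii f hint (memA j hj) (memM j hj))
      (aux_ii f hint (memM j hj) (memE j hj))).symm
  -- nonnegativity of halves
  have hp1nn : ∀ j : ℕ, j < 2^ℓ → 0 ≤ p1 j := by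
    intro j hj
    apply intervalIntegral.integral_nonneg (by linarith [hM j, hA0 j, hh])
    intro x hx
    exact hnonneg x ⟨le_trans (memA j hj).1 hx.1, le_trans hx.2 (memM j hj).2⟩
  have hp2nn : ∀ j : ℕ, j < 2^ℓ → 0 ≤ p2 j := by
    intro j hj
    apply intervalIntegral.integral_nonneg (by linarith [hM j, hE j])
    intro x hx
    exact hnonneg x ⟨le_trans (memM j hj).1 hx.1, le_trans hx.2 (memE j hj).2⟩
  -- upper bound on q
  have hqB : ∀ j : ℕ, j < 2^ℓ → q j ≤ B / 2^ℓ := by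
    intro j hj
    have hle : (j:ℝ)/2^ℓ ≤ ((j:ℝ)+1)/2^ℓ := by linarith [hE j, hh]
    have h1 : q j ≤ ∫ _ in ((j:ℝ)/2^ℓ)..(((j:ℝ)+1)/2^ℓ), B := by
      apply intervalIntegral.integral_mono_on hle
        (aux_ii f hint (memA j hj) (memE j hj)) intervalIntegrable_const
      intro x hx
      exact hbound x ⟨le_trans (memA j hj).1 hx.1, le_trans hx.2 (memE j hj).2⟩
    rw [intervalIntegral.integral_const, smul_eq_mul] at h1
    have : (((j:ℝ)+1)/2^ℓ - (j:ℝ)/2^ℓ) = 1/2^ℓ := by field_simp; ring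
    rw [this] at h1
    calc q j ≤ 1/2^ℓ * B := h1
    _ = B / 2^ℓ := by ring
  -- shift comparisons
  have h2h : (1:ℝ)/2^ℓ = 1/2^(ℓ+1) + 1/2^(ℓ+1) := by rw [pow_succ]; ring
  have hcast : ∀ i j : ℕ, i < j → ((i:ℝ)+1)/2^ℓ ≤ (j:ℝ)/2^ℓ := by
    intro i j hij
    have : ((i:ℝ)+1) ≤ (j:ℝ) := by exact_mod_cast hij
    gcongr
  have hp1e : ∀ j : ℕ, p1 j = ∫ x in ((j:ℝ)/2^ℓ)..((j:ℝ)/2^ℓ + 1/2^(ℓ+1)), f x := by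
    intro j; simp only [hp1]; rw [hM j]
  have hp2e : ∀ j : ℕ,
      p2 j = ∫ x in ((j:ℝ)/2^ℓ + 1/2^(ℓ+1))..(((j:ℝ)/2^ℓ + 1/2^(ℓ+1)) + 1/2^(ℓ+1)), f x := by
    intro j; simp only [hp2]; rw [hM j, hE j]
  have hshift1 : ∀ i j : ℕ, i < j → j < 2^ℓ → p1 j ≤ p1 i := by
    intro i j hij hj
    rw [hp1e i, hp1e j]
    apply aux_shift f hmono hint (hA0 i)
      (by have : (i:ℝ) ≤ (j:ℝ) := by exact_mod_cast hij.le
          gcongr)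
      hh.le (by linarith [hE j, hB1 j hj, hh])
  have hshift2 : ∀ i j : ℕ, i < j → j < 2^ℓ → p1 j ≤ p2 i := by
    intro i j hij hj
    rw [hp2e i, hp1e j]
    have key : (i:ℝ)/2^ℓ + 1/2^(ℓ+1) ≤ (j:ℝ)/2^ℓ := by
      have := hcast i j hij
      have hd : ((i:ℝ)+1)/2^ℓ = (i:ℝ)/2^ℓ + 1/2^ℓ := by ring
      linarith [hh]
    have := aux_shift f hmono hint (a := (i:ℝ)/2^ℓ + 1/2^(ℓ+1)) (b := (j:ℝ)/2^ℓ)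
      (h := 1/2^(ℓ+1)) (by positivity) key hh.le (by linarith [hE j, hB1 j hj, hh])
    linarith [this]
  -- chain inequality
  have hchain : ∀ i j : ℕ, i < j → j < 2^ℓ →
      γ * Real.sqrt (q j / n) < p1 j - p2 j →
      q j + γ * Real.sqrt (q j / n) ≤ q i := by
    intro i j hij hj hu
    have hi : i < 2^ℓ := lt_trans hij hj
    have e1 := hsplit i hi
    have e2 := hsplit j hj
    have := hshift1 i j hij hj
    have := hshift2 i j hij hj
    linarith
  -- lower bound for unbalanced intervals
  have hnr : (0:ℝ) < n := by exact_mod_cast hn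
  have hlow : ∀ j : ℕ, j < 2^ℓ →
      γ * Real.sqrt (q j / n) < p1 j - p2 j → γ^2/n < q j := by
    intro j hj hu
    have e2 := hsplit j hj
    have h1 : γ * Real.sqrt (q j / n) < q j := by
      have := hp1nn j hj; have := hp2nn j hj; linarith
    have hqpos : 0 < q j :=
      lt_of_le_of_lt (by positivity) h1
    have hsq : Real.sqrt (q j / n)^2 = q j / n := Real.sq_sqrt (by positivity)
    have hs0 : 0 ≤ Real.sqrt (q j / n) := Real.sqrt_nonneg _
    have h3 : (γ * Real.sqrt (q j / n)) * (γ * Real.sqrt (q j / n)) < q j * q j :=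
      mul_lt_mul'' h1 h1 (by positivity) (by positivity)
    have hspos : 0 < Real.sqrt (q j / n) := Real.sqrt_pos.mpr (by positivity)
    have hqe : q j = Real.sqrt (q j / n)^2 * n := by rw [hsq]; field_simp
    rw [div_lt_iff₀ hnr]
    nlinarith [h3, hqe, hspos, mul_pos hspos hspos, hnr]
  -- basic sqrt facts
  have hs2 : Real.sqrt 2 ^ 2 = 2 := Real.sq_sqrt (by norm_num)
  have hs2u : Real.sqrt 2 ≤ 1.5 := by
    nlinarith [hs2, Real.sqrt_nonneg 2]
  have hs2pos : 0 < Real.sqrt 2 := Real.sqrt_pos.mpr (by norm_num)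
  -- the set of unbalanced intervals
  have hsetseq : {i : ℕ | i < 2^ℓ ∧
        γ * Real.sqrt ((∫ x in ((i:ℝ)/2^ℓ)..(((i:ℝ)+1)/2^ℓ), f x) / n) <
          (∫ x in ((i:ℝ)/2^ℓ)..((2*(i:ℝ)+1)/2^(ℓ+1)), f x) -
            ∫ x in ((2*(i:ℝ)+1)/2^(ℓ+1))..(((i:ℝ)+1)/2^ℓ), f x}
      = {i : ℕ | i < 2^ℓ ∧ γ * Real.sqrt (q i / n) < p1 i - p2 i} := by
    simp only [hq, hp1, hp2]
  set S' : Set ℕ := {i : ℕ | i < 2^ℓ ∧ γ * Real.sqrt (q i / n) < p1 i - p2 i} with hS'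
  have hmemS : ∀ i : ℕ, i ∈ S' → i < 2^ℓ ∧ γ * Real.sqrt (q i / n) < p1 i - p2 i := by
    intro i hi; exact hi
  have hfin : S'.Finite := (Set.finite_Iio (2^ℓ)).subset (fun i hi => (hmemS i hi).1)
  set M := hfin.toFinset.card with hMdef
  have hcard : S'.ncard = M := Set.ncard_eq_toFinset_card _ hfin
  rw [hsetseq, hcard]
  rcases Nat.eq_zero_or_pos M with hM0 | hM0
  · rw [hM0]
    have h1 : (0:ℝ) < (2:ℝ)^((ℓ:ℝ)/2) := Real.rpow_pos_of_pos (by norm_num) _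
    have h2 : (0:ℝ) ≤ 2 * Real.sqrt 2 / γ * Real.sqrt (B*n) / (2:ℝ)^((ℓ:ℝ)/2) := by
      positivity
    simpa using h2
  · -- extract large element
    have hqnn : ∀ j ∈ S', 0 ≤ q j := by
      intro j hj
      rw [hsplit j (hmemS j hj).1]
      have := hp1nn j (hmemS j hj).1
      have := hp2nn j (hmemS j hj).1
      linarith
    have hbase : ∀ j ∈ S', γ^2/(n:ℝ) < q j := by
      intro j hj
      exact hlow j (hmemS j hj).1 (hmemS j hj).2
    have hchain' : ∀ i ∈ S', ∀ j ∈ S', i < j → q j + γ * Real.sqrt (q j / n) ≤ q i := by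
      intro i hi j hj hij
      exact hchain i j hij (hmemS j hj).1 (hmemS j hj).2
    obtain ⟨j, hjS, hjq⟩ := aux_comb γ n hγ hn q S' hfin hbase hchain' hqnn (M-1)
      (by omega)
    have hqb := hqB j (hmemS j hjS).1
    have hcastM : (((M-1:ℕ)):ℝ) + 2 = (M:ℝ)+1 := by
      have h1 : ((M-1:ℕ):ℝ) = (M:ℝ) - 1 := by
        have : (1:ℕ) ≤ M := hM0
        push_cast [this]; ring
      rw [h1]; ring
    rw [hcastM] at hjq
    have hc : γ^2/(8*(n:ℝ)) * ((M:ℝ)+1)^2 ≤ B/2^ℓ := le_trans hjq hqb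
    have hcM : γ^2/(8*(n:ℝ)) * (M:ℝ)^2 ≤ B/2^ℓ := by
      have h2 : (M:ℝ)^2 ≤ ((M:ℝ)+1)^2 := by
        nlinarith [(Nat.cast_nonneg M : (0:ℝ) ≤ (M:ℝ))]
      have h3 := mul_le_mul_of_nonneg_left h2 (by positivity : (0:ℝ) ≤ γ^2/(8*(n:ℝ)))
      linarith
    -- the right-hand side squared
    have hpow : ((2:ℝ)^((ℓ:ℝ)/2))^2 = (2:ℝ)^ℓ := by
      rw [← Real.rpow_natCast ((2:ℝ)^((ℓ:ℝ)/2)) 2, ← Real.rpow_mul (by norm_num)]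
      rw [show (ℓ:ℝ)/2 * (2:ℕ) = (ℓ:ℝ) by push_cast; ring]
      rw [Real.rpow_natCast]
    have hBn : Real.sqrt (B*(n:ℝ))^2 = B*(n:ℝ) := Real.sq_sqrt (by positivity)
    have hRpos : 0 < 2 * Real.sqrt 2 / γ * Real.sqrt (B * n) / (2:ℝ)^((ℓ:ℝ)/2) := by
      have h1 : (0:ℝ) < (2:ℝ)^((ℓ:ℝ)/2) := Real.rpow_pos_of_pos (by norm_num) _
      have h2 : (0:ℝ) < Real.sqrt (B*(n:ℝ)) := Real.sqrt_pos.mpr (by positivity)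
      positivity
    have hR2 : (2 * Real.sqrt 2 / γ * Real.sqrt (B * n) / (2:ℝ)^((ℓ:ℝ)/2))^2
        = 8*(B*(n:ℝ))/(γ^2*2^ℓ) := by
      rw [div_pow, mul_pow, div_pow, mul_pow, hs2, hBn, hpow]
      ring
    have hM2 : ((M:ℝ))^2 ≤ (2 * Real.sqrt 2 / γ * Real.sqrt (B * n) / (2:ℝ)^((ℓ:ℝ)/2))^2 := by
      rw [hR2]
      rw [le_div_iff₀ (by positivity)]
      rw [div_mul_eq_mul_div, div_le_div_iff₀ (by positivity) (by positivity)] at hcM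
      nlinarith [hcM]
    nlinarith [hM2, hRpos, (Nat.cast_nonneg M : (0:ℝ) ≤ (M:ℝ))]
end

section
/- Let N ~ Binomial(m, q) with q = p'/p where p = p' + p'', p', p'' > 0, and suppose p' - p'' = γ√(2p/n) + ξ with ξ > 0 and m ≥ np/2. Then P(2N - m < γ√m) ≤ 2p/(2p + nξ²). -/
set_option maxHeartbeats 1600000


open MeasureTheory Finset Polynomial

lemma cantelli_discrete (w : ℕ → ℝ) (s : Finset ℕ) (hw : ∀ k ∈ s, 0 ≤ w k)
    (x a V : ℝ) (ha : 0 < a) (hV : 0 < V)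
    (hsum : ∑ k ∈ s, w k = 1)
    (hmean : ∑ k ∈ s, w k * (x - k) = 0)
    (hvar : ∑ k ∈ s, w k * (x - k)^2 = V) :
    ∑ k ∈ s.filter (fun k : ℕ => (k:ℝ) < x - a), w k ≤ V / (V + a^2) := by
  classical
  set c := V / a with hc
  have hc0 : 0 < c := div_pos hV ha
  have hac : 0 < a + c := by linarith
  have step1 : ∑ k ∈ s.filter (fun k : ℕ => (k:ℝ) < x - a), w k ≤
      ∑ k ∈ s, w k * ((x - k + c)/(a + c))^2 := by
    refine le_trans (Finset.sum_le_sum ?_)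
      (Finset.sum_le_sum_of_subset_of_nonneg (Finset.filter_subset _ _) ?_)
    · intro k hk
      obtain ⟨hks, hkc⟩ := Finset.mem_filter.mp hk
      have h1 : 1 ≤ (x - k + c)/(a + c) := by
        rw [le_div_iff₀ hac]; linarith
      nlinarith [hw k hks, sq_nonneg ((x - (k:ℝ) + c)/(a+c) - 1)]
    · intro k hk _
      exact mul_nonneg (hw k hk) (sq_nonneg _)
  have step2 : ∑ k ∈ s, w k * ((x - k + c)/(a + c))^2 = (V + c^2)/(a+c)^2 := by
    have h : ∀ k ∈ s, w k * ((x - k + c)/(a+c))^2 =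
        (w k * (x-k)^2 + (2*c) * (w k * (x-k)) + c^2 * w k) / (a+c)^2 := by
      intro k _; field_simp; ring
    rw [Finset.sum_congr rfl h, ← Finset.sum_div, Finset.sum_add_distrib,
      Finset.sum_add_distrib, ← Finset.mul_sum, ← Finset.mul_sum, hvar, hmean, hsum]
    ring
  have key : (V + c^2)/(a+c)^2 = V/(V + a^2) := by
    rw [hc]; field_simp; ring
  rw [step2, key] at step1
  exact step1

lemma binom_sum (m : ℕ) (q : ℝ) :
    ∑ k ∈ range (m+1), (m.choose k : ℝ) * q^k * (1-q)^(m-k) = 1 := by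
  have h := congrArg (Polynomial.eval q) (bernsteinPolynomial.sum ℝ m)
  simpa [Polynomial.eval_finset_sum, bernsteinPolynomial] using h

lemma binom_mean (m : ℕ) (q : ℝ) :
    ∑ k ∈ range (m+1), (k:ℝ) * ((m.choose k : ℝ) * q^k * (1-q)^(m-k)) = m * q := by
  have h := congrArg (Polynomial.eval q) (bernsteinPolynomial.sum_smul ℝ m)
  simpa [Polynomial.eval_finset_sum, bernsteinPolynomial, nsmul_eq_mul, mul_assoc] using h

lemma binom_var (m : ℕ) (q : ℝ) :
    ∑ k ∈ range (m+1), ((m:ℝ) * q - k)^2 * ((m.choose k : ℝ) * q^k * (1-q)^(m-k))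
      = m * q * (1 - q) := by
  have h := congrArg (Polynomial.eval q) (bernsteinPolynomial.variance ℝ m)
  simpa [Polynomial.eval_finset_sum, bernsteinPolynomial, nsmul_eq_mul, mul_assoc] using h

theorem stmt12 {Ω : Type*} [MeasurableSpace Ω] (μ : Measure Ω) [IsProbabilityMeasure μ]
    (p' p'' γ ξ : ℝ) (n m : ℕ) (N : Ω → ℕ) (hmeas : Measurable N)
    (hp' : 0 < p') (hp'' : 0 < p'') (hγ : 0 < γ) (hn : 1 ≤ n) (hξ : 0 < ξ)
    (hsplit : p' - p'' = γ * Real.sqrt (2 * (p' + p'') / n) + ξ)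
    (hm : (n:ℝ) * (p' + p'') / 2 ≤ m)
    (hdist : ∀ k : ℕ, μ {ω | N ω = k} =
      ENNReal.ofReal ((m.choose k : ℝ) * (p'/(p'+p''))^k * (1 - p'/(p'+p''))^(m-k))) :
    (μ {ω | 2 * (N ω : ℝ) - m < γ * Real.sqrt m}).toReal ≤
      2 * (p' + p'') / (2 * (p' + p'') + n * ξ^2) := by
  classical
  set p : ℝ := p' + p'' with hpdef
  have hp : 0 < p := by rw [hpdef]; linarith
  set q : ℝ := p' / p with hqdef
  have hq0 : 0 < q := div_pos hp' hp
  have hq1 : q < 1 := by rw [hqdef, div_lt_one hp, hpdef]; linarith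
  have hq1' : 0 ≤ 1 - q := by linarith
  have hn' : (1:ℝ) ≤ (n:ℝ) := by exact_mod_cast hn
  have hm0 : (0:ℝ) < m := lt_of_lt_of_le (by positivity) hm
  set w : ℕ → ℝ := fun k => (m.choose k : ℝ) * q^k * (1-q)^(m-k) with hw
  have hwnn : ∀ k, 0 ≤ w k := by
    intro k
    have : (0:ℝ) ≤ 1 - q := hq1'
    rw [hw]; positivity
  have hsum : ∑ k ∈ Finset.range (m+1), w k = 1 := binom_sum m q
  have hmean' : ∑ k ∈ Finset.range (m+1), (k:ℝ) * w k = (m:ℝ) * q := binom_mean m q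
  have hvarraw : ∑ k ∈ Finset.range (m+1), ((m:ℝ) * q - k)^2 * w k = (m:ℝ) * q * (1 - q) :=
    binom_var m q
  clear_value p q w
  obtain ⟨x, hx⟩ : ∃ x : ℝ, x = (m:ℝ) * q := ⟨_, rfl⟩
  obtain ⟨a, hadef⟩ : ∃ a : ℝ, a = x - ((m:ℝ) + γ * Real.sqrt m)/2 := ⟨_, rfl⟩
  -- √ inequality:  p √m ≤ m √(2p/n)
  have hsq : p * Real.sqrt m ≤ (m:ℝ) * Real.sqrt (2*p/(n:ℝ)) := by
    have h1 : p * Real.sqrt m = Real.sqrt (p^2 * m) := by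
      rw [Real.sqrt_mul (by positivity), Real.sqrt_sq hp.le]
    have h2 : (m:ℝ) * Real.sqrt (2*p/(n:ℝ)) = Real.sqrt ((m:ℝ)^2 * (2*p/(n:ℝ))) := by
      rw [Real.sqrt_mul (by positivity), Real.sqrt_sq (by positivity)]
    rw [h1, h2]
    apply Real.sqrt_le_sqrt
    rw [show (m:ℝ)^2 * (2*p/(n:ℝ)) = (m:ℝ)^2 * (2*p)/(n:ℝ) by ring,
      le_div_iff₀ (by positivity : (0:ℝ) < (n:ℝ))]
    nlinarith [mul_le_mul_of_nonneg_right hm (le_of_lt (mul_pos hp hm0))]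
  -- key mean identity
  have key1 : (m:ℝ) * q - (m:ℝ)/2 =
      (m:ℝ) * (γ * Real.sqrt (2 * p / (n:ℝ)) + ξ)/(2*p) := by
    rw [← hsplit, hqdef, hpdef]
    field_simp
    ring
  have ha_lb : (m:ℝ) * ξ / (2*p) ≤ a := by
    have h3 : γ * (p * Real.sqrt m) ≤ γ * ((m:ℝ) * Real.sqrt (2*p/(n:ℝ))) :=
      mul_le_mul_of_nonneg_left hsq hγ.le
    have h4 : (m:ℝ) * (γ * Real.sqrt (2 * p / (n:ℝ)) + ξ)/(2*p) - (m:ℝ)*ξ/(2*p)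
        - γ * Real.sqrt m / 2
        = (γ * ((m:ℝ) * Real.sqrt (2*p/(n:ℝ))) - γ * (p * Real.sqrt m))/(2*p) := by
      field_simp
      ring
    have h5 : 0 ≤ (γ * ((m:ℝ) * Real.sqrt (2*p/(n:ℝ))) - γ * (p * Real.sqrt m))/(2*p) :=
      div_nonneg (by linarith) (by positivity)
    rw [hadef, hx]
    linarith [key1, h4, h5]
  have ha : 0 < a := lt_of_lt_of_le (by positivity) ha_lb
  obtain ⟨V, hVdef⟩ : ∃ V : ℝ, V = (m:ℝ) * q * (1-q) := ⟨_, rfl⟩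
  have hVpos : 0 < V := by
    rw [hVdef]
    have h01 : 0 < 1 - q := by linarith
    exact mul_pos (mul_pos hm0 hq0) h01
  have hV4 : V ≤ (m:ℝ)/4 := by
    rw [hVdef]; nlinarith [sq_nonneg (q - 1/2), hm0]
  -- moments
  have hmean : ∑ k ∈ range (m+1), w k * (x - k) = 0 := by
    have h : ∀ k ∈ range (m+1), w k * (x - k) = x * w k - (k:ℝ) * w k := by
      intro k _; ring
    rw [Finset.sum_congr rfl h, Finset.sum_sub_distrib, ← Finset.mul_sum, hsum, hmean', hx]
    ring
  have hvar : ∑ k ∈ range (m+1), w k * (x - k)^2 = V := by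
    rw [hVdef, ← hvarraw]
    apply Finset.sum_congr rfl
    intro k _
    rw [hx]
    ring
  have hcant := cantelli_discrete w (range (m+1)) (fun k _ => hwnn k) x a V ha hVpos
    hsum hmean hvar
  -- measure of the event as a finite sum
  have hEeq : {ω | 2 * (N ω : ℝ) - m < γ * Real.sqrt m} =
      ⋃ k : ℕ, (if 2*(k:ℝ) - m < γ * Real.sqrt m then {ω | N ω = k} else (∅ : Set Ω)) := by
    ext ω
    simp only [Set.mem_setOf_eq, Set.mem_iUnion]
    constructor
    · intro h
      exact ⟨N ω, by rw [if_pos h]; exact rfl⟩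
    · rintro ⟨k, hk⟩
      by_cases hc : 2*(k:ℝ) - m < γ * Real.sqrt m
      · rw [if_pos hc] at hk
        have hNk : N ω = k := hk
        rw [hNk]; exact hc
      · rw [if_neg hc] at hk
        exact absurd hk (Set.notMem_empty ω)
  have hmeasset : ∀ k : ℕ, MeasurableSet
      (if 2*(k:ℝ) - m < γ * Real.sqrt m then {ω | N ω = k} else (∅ : Set Ω)) := by
    intro k
    split_ifs
    · exact hmeas (measurableSet_singleton k)
    · exact MeasurableSet.empty
  have hdisj : Pairwise (Function.onFun Disjoint
      (fun k : ℕ => (if 2*(k:ℝ) - m < γ * Real.sqrt m then {ω | N ω = k} else (∅ : Set Ω)))) := by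
    intro i j hij
    dsimp [Function.onFun]
    split_ifs
    · refine Set.disjoint_left.mpr ?_
      intro ω h1 h2
      exact hij ((h1 : N ω = i).symm.trans (h2 : N ω = j))
    · simp
    · simp
    · simp
  have hmu : μ {ω | 2 * (N ω : ℝ) - m < γ * Real.sqrt m} =
      ∑' k : ℕ, ENNReal.ofReal (if 2*(k:ℝ) - m < γ * Real.sqrt m then w k else 0) := by
    rw [hEeq, measure_iUnion hdisj hmeasset]
    apply tsum_congr
    intro k
    split_ifs with hc
    · simp only [hw]; exact hdist k
    · simp
  have hzero : ∀ k ∉ range (m+1),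
      ENNReal.ofReal (if 2*(k:ℝ) - m < γ * Real.sqrt m then w k else 0) = 0 := by
    intro k hk
    have hk' : m < k := by
      by_contra h
      exact hk (Finset.mem_range.mpr (by omega))
    have hwk : w k = 0 := by
      rw [hw]
      simp [Nat.choose_eq_zero_of_lt hk']
    split_ifs <;> simp [hwk]
  have hsum_eq : (μ {ω | 2 * (N ω : ℝ) - m < γ * Real.sqrt m}).toReal =
      ∑ k ∈ range (m+1), (if 2*(k:ℝ) - m < γ * Real.sqrt m then w k else 0) := by
    rw [hmu, tsum_eq_sum hzero, ← ENNReal.ofReal_sum_of_nonneg, ENNReal.toReal_ofReal]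
    · apply Finset.sum_nonneg
      intro k _
      split_ifs
      · exact hwnn k
      · exact le_refl 0
    · intro k _
      split_ifs
      · exact hwnn k
      · exact le_refl 0
  have hfilter : ∑ k ∈ range (m+1), (if 2*(k:ℝ) - m < γ * Real.sqrt m then w k else 0)
      = ∑ k ∈ (range (m+1)).filter (fun k : ℕ => (k:ℝ) < x - a), w k := by
    rw [← Finset.sum_filter]
    apply Finset.sum_congr
    · apply Finset.filter_congr
      intro k _
      have hxa : x - a = ((m:ℝ) + γ * Real.sqrt m)/2 := by rw [hadef]; ring
      constructor
      · intro h; rw [hxa]; linarith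
      · intro h; rw [hxa] at h; linarith
    · intro k _; rfl
  have hfinal : V / (V + a^2) ≤ 2 * p / (2 * p + (n:ℝ) * ξ^2) := by
    rw [div_le_div_iff₀ (by positivity) (by positivity)]
    have hA' : (m:ℝ) * ξ ≤ a * (2*p) := (div_le_iff₀ (by positivity)).mp ha_lb
    have hA2 : ((m:ℝ) * ξ)^2 ≤ (a * (2*p))^2 := by
      apply pow_le_pow_left₀ (by positivity) hA' 2
    have h6 : (n:ℝ) * p ≤ 2 * m := by linarith
    have h7 : V * ((n:ℝ) * ξ^2) ≤ ((m:ℝ)/4) * ((n:ℝ) * ξ^2) :=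
      mul_le_mul_of_nonneg_right hV4 (by positivity)
    have h8 : (m:ℝ) * ((n:ℝ)*p) * ξ^2 ≤ (m:ℝ) * (2*m) * ξ^2 := by
      nlinarith [h6, hm0, sq_nonneg ξ]
    nlinarith [hA2, h7, h8, hp, hVpos, mul_le_mul_of_nonneg_left h7 hp.le, sq_nonneg ξ]
  rw [hsum_eq, hfilter]
  exact le_trans hcant hfinal
end

section
/- Let N' ~ Binomial(N, p'/p) conditionally on N, where p = p'+p'', p',p'' > 0, γ > 2, and suppose p' - p'' ≤ (γ/2)√(p/n) and N ≤ np. Then P(2N' - N > γ√N | N) ≤ 1/(1 + γ²/4) < 1/2. -/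
open MeasureTheory Finset

lemma bsum0 (q : ℝ) (N : ℕ) :
    ∑ k ∈ range (N+1), (N.choose k : ℝ) * q^k * (1-q)^(N-k) = 1 := by
  have h := congrArg (Polynomial.eval q) (bernsteinPolynomial.sum ℝ N)
  simpa [bernsteinPolynomial, Polynomial.eval_finset_sum] using h

lemma bsum1 (q : ℝ) (N : ℕ) :
    ∑ k ∈ range (N+1), (k:ℝ) * ((N.choose k : ℝ) * q^k * (1-q)^(N-k)) = N * q := by
  have h := congrArg (Polynomial.eval q) (bernsteinPolynomial.sum_smul ℝ N)
  simpa [bernsteinPolynomial, Polynomial.eval_finset_sum, nsmul_eq_mul, mul_assoc] using h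

lemma bsum2 (q : ℝ) (N : ℕ) :
    ∑ k ∈ range (N+1), ((N:ℝ)*q - (k:ℝ))^2 * ((N.choose k : ℝ) * q^k * (1-q)^(N-k)) = N*q*(1-q) := by
  have h := congrArg (Polynomial.eval q) (bernsteinPolynomial.variance ℝ N)
  simpa [bernsteinPolynomial, Polynomial.eval_finset_sum, nsmul_eq_mul, mul_assoc] using h

/-- Cantelli-style bound for the binomial tail. -/
lemma key_real (q γ : ℝ) (N : ℕ) (hq0 : 0 ≤ q) (hq1 : q ≤ 1) (hγ : 2 < γ)
    (hmean : (N:ℝ)*q - N/2 ≤ γ * Real.sqrt N / 4) :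
    ∑ k ∈ range (N+1), (if γ * Real.sqrt N < 2*(k:ℝ) - N then
        (N.choose k : ℝ) * q^k * (1-q)^(N-k) else 0) ≤ 1/(1+γ^2/4) := by
  have hγ0 : (0:ℝ) < γ := by linarith
  rcases Nat.eq_zero_or_pos N with hN0 | hNpos
  · subst hN0
    rw [Finset.sum_eq_zero]
    · positivity
    intro k hk
    rw [Finset.mem_range, Nat.lt_one_iff] at hk
    subst hk
    rw [if_neg (by simp)]
  set s : ℝ := Real.sqrt N with hs_def
  have hs : 0 < s := Real.sqrt_pos.2 (by exact_mod_cast hNpos)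
  have hs2 : s * s = N := Real.mul_self_sqrt (Nat.cast_nonneg N)
  set m : ℝ := (N:ℝ) * q with hm_def
  set lam : ℝ := s / γ with hlam_def
  set c : ℝ := γ * s / 4 + s / γ with hc_def
  have hc : 0 < c := by positivity
  set b : ℕ → ℝ := fun k => (N.choose k : ℝ) * q^k * (1-q)^(N-k) with hb_def
  have hb0 : ∀ k, 0 ≤ b k := fun k => by
    have h1 : (0:ℝ) ≤ 1 - q := by linarith
    positivity
  have step1 : ∑ k ∈ range (N+1), (if γ * s < 2*(k:ℝ) - N then b k else 0)
      ≤ ∑ k ∈ range (N+1), b k * (((k:ℝ) - m + lam)/c)^2 := by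
    apply Finset.sum_le_sum
    intro k _
    split_ifs with h
    · have hk : c ≤ (k:ℝ) - m + lam := by
        have : γ * s / 4 ≤ (k:ℝ) - m := by linarith
        simp only [hc_def]; linarith
      have h1 : (1:ℝ) ≤ (((k:ℝ) - m + lam)/c)^2 := by
        have h2 : (1:ℝ) ≤ ((k:ℝ) - m + lam)/c := (one_le_div hc).2 hk
        nlinarith
      nlinarith [hb0 k]
    · exact mul_nonneg (hb0 k) (sq_nonneg _)
  have step2 : ∑ k ∈ range (N+1), b k * (((k:ℝ) - m + lam)/c)^2
      = ((N:ℝ)*q*(1-q) + lam^2) / c^2 := by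
    have expand : ∀ k ∈ range (N+1), b k * (((k:ℝ) - m + lam)/c)^2
        = (1/c^2) * ((m - (k:ℝ))^2 * b k) + (2*lam/c^2) * ((k:ℝ) * b k)
          + ((lam^2 - 2*lam*m)/c^2) * b k := by
      intro k _
      field_simp
      ring
    rw [Finset.sum_congr rfl expand]

    simp only [Finset.sum_add_distrib, ← Finset.mul_sum]
    rw [hb_def]
    simp only [hm_def, bsum0, bsum1, bsum2]
    field_simp
    ring
  have hN' : (0:ℝ) < N := by exact_mod_cast hNpos
  have hsN : s^2 = (N:ℝ) := by rw [sq]; exact hs2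
  have step3 : ((N:ℝ)*q*(1-q) + lam^2) / c^2 ≤ 1/(1+γ^2/4) := by
    have hA : (N:ℝ)*q*(1-q) + lam^2 ≤ (N:ℝ)/4 + N/γ^2 := by
      have h1 : (N:ℝ)*q*(1-q) ≤ N/4 := by nlinarith [sq_nonneg (1-2*q)]
      have h2 : lam^2 = (N:ℝ)/γ^2 := by
        rw [hlam_def, div_pow, hsN]
      linarith
    have hc2 : c^2 = ((N:ℝ)/4 + N/γ^2) * (1+γ^2/4) := by
      have h3 : c^2 = s^2*(γ/4 + 1/γ)^2 := by rw [hc_def]; ring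
      rw [h3, hsN]
      field_simp
      ring
    calc ((N:ℝ)*q*(1-q) + lam^2) / c^2 ≤ ((N:ℝ)/4 + N/γ^2) / c^2 := by gcongr
      _ = 1/(1+γ^2/4) := by
          rw [hc2, div_eq_div_iff (by positivity) (by positivity)]
          ring
  calc ∑ k ∈ range (N+1), (if γ * s < 2*(k:ℝ) - N then b k else 0)
      ≤ ∑ k ∈ range (N+1), b k * (((k:ℝ) - m + lam)/c)^2 := step1
    _ = ((N:ℝ)*q*(1-q) + lam^2) / c^2 := step2
    _ ≤ 1/(1+γ^2/4) := step3

theorem stmt13 {Ω : Type*} [MeasurableSpace Ω] (μ : Measure Ω) [IsProbabilityMeasure μ]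
    (p' p'' γ : ℝ) (n N : ℕ) (N' : Ω → ℕ) (hmeas : Measurable N')
    (hp' : 0 < p') (hp'' : 0 < p'') (hγ : 2 < γ) (hn : 1 ≤ n)
    (hsplit : p' - p'' ≤ (γ/2) * Real.sqrt ((p' + p'') / n))
    (hN : (N:ℝ) ≤ n * (p' + p''))
    (hdist : ∀ k : ℕ, μ {ω | N' ω = k} =
      ENNReal.ofReal ((N.choose k : ℝ) * (p'/(p'+p''))^k * (1 - p'/(p'+p''))^(N-k))) :
    (μ {ω | γ * Real.sqrt N < 2 * (N' ω : ℝ) - N}).toReal ≤ 1 / (1 + γ^2/4) ∧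
      1 / (1 + γ^2/4) < 1/2 := by
  have hγ0 : (0:ℝ) < γ := by linarith
  constructor
  swap
  · rw [div_lt_div_iff₀ (by positivity) (by norm_num)]
    nlinarith
  set p : ℝ := p' + p'' with hp_def
  have hp : 0 < p := by positivity
  set q : ℝ := p' / p with hq_def
  have hq0 : 0 ≤ q := by positivity
  have hq1 : q ≤ 1 := (div_le_one hp).2 (by linarith)
  set b : ℕ → ℝ := fun k => (N.choose k : ℝ) * q^k * (1-q)^(N-k) with hb_def
  have hb0 : ∀ k, 0 ≤ b k := fun k => by
    have h1 : (0:ℝ) ≤ 1 - q := by linarith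
    positivity
  -- mean bound
  have hmean : (N:ℝ)*q - N/2 ≤ γ * Real.sqrt N / 4 := by
    have hn' : (0:ℝ) < n := by exact_mod_cast hn
    set a : ℝ := Real.sqrt n with ha_def
    set bb : ℝ := Real.sqrt p with hbb_def
    set s : ℝ := Real.sqrt N with hs_def
    have ha : 0 < a := Real.sqrt_pos.2 hn'
    have hbbp : 0 < bb := Real.sqrt_pos.2 hp
    have ha2 : a * a = n := Real.mul_self_sqrt (le_of_lt hn')
    have hbb2 : bb * bb = p := Real.mul_self_sqrt (le_of_lt hp)
    have hs0 : 0 ≤ s := Real.sqrt_nonneg _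
    have hs2 : s * s = N := Real.mul_self_sqrt (Nat.cast_nonneg N)
    have hsab : s ≤ a * bb := by
      rw [ha_def, hbb_def, ← Real.sqrt_mul (le_of_lt hn')]
      exact Real.sqrt_le_sqrt hN
    have hsqrt : Real.sqrt (p / n) = bb / a := by
      rw [hbb_def, ha_def, Real.sqrt_div (le_of_lt hp)]
    have e1 : (N:ℝ)*q - N/2 = (N/(2*p)) * (p'-p'') := by
      rw [hq_def, hp_def]
      field_simp
      ring
    have e2 : (N/(2*p)) * (p'-p'') ≤ (N/(2*p)) * ((γ/2) * Real.sqrt (p/n)) := by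
      apply mul_le_mul_of_nonneg_left hsplit
      positivity
    have h4 : (N:ℝ)/(a*bb) ≤ s := by
      rw [div_le_iff₀ (by positivity)]
      calc (N:ℝ) = s * s := hs2.symm
        _ ≤ s * (a*bb) := by nlinarith
        _ = s * (a*bb) := rfl
    have e3 : (N/(2*p)) * ((γ/2) * Real.sqrt (p/n)) ≤ γ * s / 4 := by
      rw [hsqrt]
      have heq : (N/(2*p)) * ((γ/2) * (bb/a)) = (γ/4) * ((N:ℝ)/(a*bb)) := by
        rw [← hbb2]
        field_simp
        ring
      rw [heq]
      calc (γ/4) * ((N:ℝ)/(a*bb)) ≤ (γ/4) * s := by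
            apply mul_le_mul_of_nonneg_left h4; positivity
        _ = γ * s / 4 := by ring
    linarith [e1 ▸ (e2.trans e3)]
  -- measure plumbing
  have hsub : {ω | γ * Real.sqrt N < 2 * (N' ω : ℝ) - N}
      ⊆ ⋃ k : ℕ, {ω | N' ω = k ∧ γ * Real.sqrt N < 2*(k:ℝ) - N} := by
    intro ω h
    exact Set.mem_iUnion.2 ⟨N' ω, rfl, h⟩
  have h1 : μ {ω | γ * Real.sqrt N < 2 * (N' ω : ℝ) - N}
      ≤ ∑' k : ℕ, μ {ω | N' ω = k ∧ γ * Real.sqrt N < 2*(k:ℝ) - N} :=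
    (measure_mono hsub).trans (measure_iUnion_le _)
  have h2 : ∀ k : ℕ, μ {ω | N' ω = k ∧ γ * Real.sqrt N < 2*(k:ℝ) - N}
      = ENNReal.ofReal (if γ * Real.sqrt N < 2*(k:ℝ) - N then b k else 0) := by
    intro k
    by_cases h : γ * Real.sqrt N < 2*(k:ℝ) - N
    · rw [if_pos h]
      have : {ω | N' ω = k ∧ γ * Real.sqrt N < 2*(k:ℝ) - N} = {ω | N' ω = k} := by
        ext ω; simp [h]
      rw [this, hdist k]
    · rw [if_neg h]
      have : {ω | N' ω = k ∧ γ * Real.sqrt N < 2*(k:ℝ) - N} = (∅ : Set Ω) := by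
        ext ω; simp [h]
      simp [this]
  have h3 : ∑' k : ℕ, ENNReal.ofReal (if γ * Real.sqrt N < 2*(k:ℝ) - N then b k else 0)
      = ∑ k ∈ range (N+1), ENNReal.ofReal (if γ * Real.sqrt N < 2*(k:ℝ) - N then b k else 0) := by
    apply tsum_eq_sum
    intro k hk
    rw [Finset.mem_range, not_lt] at hk
    have hch : N.choose k = 0 := Nat.choose_eq_zero_of_lt hk
    have hbk : b k = 0 := by rw [hb_def]; simp [hch]
    split_ifs <;> simp [hbk]
  have h4 : ∑ k ∈ range (N+1), ENNReal.ofReal (if γ * Real.sqrt N < 2*(k:ℝ) - N then b k else 0)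
      = ENNReal.ofReal (∑ k ∈ range (N+1), (if γ * Real.sqrt N < 2*(k:ℝ) - N then b k else 0)) := by
    rw [ENNReal.ofReal_sum_of_nonneg]
    intro k _
    split_ifs
    · exact hb0 k
    · exact le_refl 0
  have hkey : ∑ k ∈ range (N+1), (if γ * Real.sqrt N < 2*(k:ℝ) - N then b k else 0)
      ≤ 1/(1+γ^2/4) := by
    exact key_real q γ N hq0 hq1 hγ hmean
  apply ENNReal.toReal_le_of_le_ofReal (by positivity)
  calc μ {ω | γ * Real.sqrt N < 2 * (N' ω : ℝ) - N}
      ≤ ∑' k : ℕ, μ {ω | N' ω = k ∧ γ * Real.sqrt N < 2*(k:ℝ) - N} := h1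
    _ = ENNReal.ofReal (∑ k ∈ range (N+1), (if γ * Real.sqrt N < 2*(k:ℝ) - N then b k else 0)) := by
        rw [tsum_congr h2, h3, h4]
    _ ≤ ENNReal.ofReal (1/(1+γ^2/4)) := ENNReal.ofReal_le_ofReal hkey
end
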